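/- arXiv:1312.4205 — 4 statements merged into one kernel-verified Lean document; each statement's English description precedes it below -/
import Mathlib

section
/- Let $X$ be a reduced, connected, 1-dimensional proper scheme over a field $k$, let $\phi : \tilde{X} \to X$ be its normalization, and let $Z \subset X$ be the (finite) set of non-regular points of $X$. Assume that for every $z \in Z$ and every $z' \in \phi^{-1}(z)$ the residue fields satisfy $k(z') = k(z) = k$, and that $Z$ is nonempty. Then every degree-zero zero-cycle on $X$ is the pushforward under $\phi$ of a degree-zero zero-cycle on $\tilde{X}$. -/
open AlgebraicGeometry CategoryTheory Limits

noncomputable section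

/-- The structure map `k → Γ(X, O_X)` of a `k`-scheme. -/
def structΓ (k : Type) [Field k] (X : Scheme) [X.Over (Spec (CommRingCat.of k))] :
    k →+* Γ(X, ⊤) :=
  ((Scheme.ΓSpecIso (CommRingCat.of k)).inv ≫
    (X ↘ Spec (CommRingCat.of k)).appTop : CommRingCat.of k ⟶ _).hom

/-- The map `k → k(x)` to the residue field of a point of a `k`-scheme. -/
def resMap (k : Type) [Field k] (X : Scheme) [X.Over (Spec (CommRingCat.of k))] (x : X) :
    k →+* X.residueField x :=
  ((X.Γevaluation x).hom : Γ(X, ⊤) →+* X.residueField x).comp (structΓ k X)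

/-- The degree `[k(x) : k]` of a point of a `k`-scheme. -/
def pointDeg (k : Type) [Field k] (X : Scheme) [X.Over (Spec (CommRingCat.of k))] (x : X) : ℕ :=
  letI := (resMap k X x).toAlgebra
  Module.finrank k (X.residueField x)

/-- A zero-cycle is a finitely supported `ℤ`-valued function on (closed) points. -/
abbrev ZeroCycle (X : Scheme) := X →₀ ℤ

/-- A zero-cycle is admissible if it is supported on closed points. -/
def ZeroCycle.IsOnClosedPoints {X : Scheme} (c : ZeroCycle X) : Prop :=
  ∀ x ∈ c.support, IsClosed ({x} : Set X)

/-- The degree `∑ nᵢ [k(xᵢ) : k]` of a zero-cycle over the base field `k`. -/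
def ZeroCycle.deg (k : Type) [Field k] (X : Scheme) [X.Over (Spec (CommRingCat.of k))]
    (c : ZeroCycle X) : ℤ :=
  c.sum fun x n => n * pointDeg k X x

/-- The residue degree `[k(x) : k(φ(x))]` of a point along a morphism. -/
def relDeg {X' X : Scheme} (φ : X' ⟶ X) (x : X') : ℕ :=
  letI := ((φ.residueFieldMap x).hom : X.residueField (φ.base x) →+* X'.residueField x).toAlgebra
  Module.finrank (X.residueField (φ.base x)) (X'.residueField x)

/-- Pushforward of zero-cycles: `x ↦ [k(x) : k(φ(x))] ⬝ φ(x)`. -/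
def ZeroCycle.push {X' X : Scheme} (φ : X' ⟶ X) (c : ZeroCycle X') : ZeroCycle X :=
  c.sum fun x n => Finsupp.single (φ.base x) (n * relDeg φ x)

/-- A point of a scheme is regular if its local ring is regular; for points of schemes of
dimension at most one this means that the local ring is a field or a discrete valuation
ring. -/
def IsRegularPoint (X : Scheme) (x : X) : Prop :=
  IsField (X.presheaf.stalk x) ∨
    ∃ _ : IsDomain (X.presheaf.stalk x), IsDiscreteValuationRing (X.presheaf.stalk x)

/-! Over the regular locus `φ` is an isomorphism, so a closed regular point has a unique
preimage, which is closed and has the same residue field. Over a singular point all residue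
fields are `k`, and the fibre, being closed and compact, contains a closed point. Lifting every
point of the support of `α` in this way gives a cycle on `X̃` with the same degree whose
pushforward is `α`. -/

theorem RingHom.finrank_eq_one_of_bijective {K L : Type*} [Field K] [Field L] (f : K →+* L)
    (hf : Function.Bijective f) :
    (letI := f.toAlgebra; Module.finrank K L) = 1 := by
  let := f.toAlgebra
  refine finrank_eq_one (1 : L) one_ne_zero fun w => ?_
  obtain ⟨c, rfl⟩ := hf.2 w
  exact ⟨c, by rw [Algebra.smul_def, RingHom.algebraMap_toAlgebra, mul_one]⟩

theorem RingHom.finrank_eq_of_bijective_comp {K L₁ L₂ : Type*} [Field K] [Field L₁] [Field L₂]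
    (f₁ : K →+* L₁) (f₂ : K →+* L₂) (g : L₁ →+* L₂) (hg : Function.Bijective g)
    (hcomp : g.comp f₁ = f₂) :
    (letI := f₁.toAlgebra; Module.finrank K L₁) =
      (letI := f₂.toAlgebra; Module.finrank K L₂) := by
  let := f₁.toAlgebra
  let := f₂.toAlgebra
  let e : L₁ ≃ₗ[K] L₂ :=
    { RingEquiv.ofBijective g hg with
      map_smul' := fun c x => by
        simp only [Algebra.smul_def, RingHom.algebraMap_toAlgebra, ← hcomp]
        exact map_mul g _ _ }
  exact e.finrank_eq

theorem IsClosed.exists_closed_singleton_of_isCompact {Y : Type*} [TopologicalSpace Y]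
    [T0Space Y] {S : Set Y} (hS : IsClosed S) (hc : IsCompact S) (hne : S.Nonempty) :
    ∃ y ∈ S, IsClosed ({y} : Set Y) := by
  have : CompactSpace S := isCompact_iff_compactSpace.mp hc
  have : Nonempty S := hne.to_subtype
  obtain ⟨y, -, hy⟩ := isClosed_univ.exists_closed_singleton (X := S) Set.univ_nonempty
  refine ⟨y, y.2, ?_⟩
  simpa using hS.isClosedMap_subtype_val _ hy

theorem residueFieldMap_comp_resMap (k : Type) [Field k] {X Xt : Scheme}
    [X.Over (Spec (CommRingCat.of k))] [Xt.Over (Spec (CommRingCat.of k))]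
    (φ : Xt ⟶ X) (hφover : φ ≫ (X ↘ Spec (CommRingCat.of k)) = Xt ↘ Spec (CommRingCat.of k))
    (x : Xt) :
    (φ.residueFieldMap x).hom.comp (resMap k X (φ.base x)) = resMap k Xt x := by
  ext a
  change (φ.residueFieldMap x).hom ((X.Γevaluation (φ.base x)).hom (structΓ k X a)) =
    (Xt.Γevaluation x).hom (structΓ k Xt a)
  rw [Scheme.Γevaluation_naturality_apply]
  congr 1
  change φ.appTop.hom (structΓ k X a) = structΓ k Xt a
  simp only [structΓ, ← hφover, Scheme.Hom.comp_appTop]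
  rfl

theorem relDeg_eq_one_of_bijective {X Xt : Scheme} (φ : Xt ⟶ X) (x : Xt)
    (h : Function.Bijective (φ.residueFieldMap x).hom) : relDeg φ x = 1 :=
  RingHom.finrank_eq_one_of_bijective _ h

theorem pointDeg_eq_of_bijective_residueFieldMap (k : Type) [Field k] {X Xt : Scheme}
    [X.Over (Spec (CommRingCat.of k))] [Xt.Over (Spec (CommRingCat.of k))]
    (φ : Xt ⟶ X) (hφover : φ ≫ (X ↘ Spec (CommRingCat.of k)) = Xt ↘ Spec (CommRingCat.of k))
    (x : Xt) (h : Function.Bijective (φ.residueFieldMap x).hom) :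
    pointDeg k Xt x = pointDeg k X (φ.base x) :=
  (RingHom.finrank_eq_of_bijective_comp _ _ _ h (residueFieldMap_comp_resMap k φ hφover x)).symm

section IsoOver

variable {X Xt : Scheme} (φ : Xt ⟶ X) (U : X.Opens) [IsIso (φ ∣_ U)]

theorem bijective_residueFieldMap_of_isIso_morphismRestrict {x : Xt} (hx : φ.base x ∈ U) :
    Function.Bijective (φ.residueFieldMap x).hom := by
  let y : (φ ⁻¹ᵁ U).toScheme := ⟨x, hx⟩
  have hcomp : IsIso (((φ ⁻¹ᵁ U).ι ≫ φ).residueFieldMap y) := by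
    rw [← morphismRestrict_ι φ U]; infer_instance
  rw [Scheme.residueFieldMap_comp] at hcomp
  have hφ : IsIso (φ.residueFieldMap ((φ ⁻¹ᵁ U).ι.base y)) :=
    @IsIso.of_isIso_comp_right _ _ _ _ _ _ ((φ ⁻¹ᵁ U).ι.residueFieldMap y) _ hcomp
  exact (ConcreteCategory.isIso_iff_bijective _).mp hφ

theorem preimage_singleton_eq_of_isIso_morphismRestrict {x : Xt} (hx : φ.base x ∈ U) :
    φ.base ⁻¹' {φ.base x} = {x} := by
  have hinj : Function.Injective (φ ∣_ U).base :=
    (TopCat.homeoOfIso (asIso (φ ∣_ U).base)).injective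
  rw [morphismRestrict_base] at hinj
  ext y
  refine ⟨fun hy => ?_, fun hy => hy ▸ rfl⟩
  have hyU : φ.base y ∈ U := (hy : φ.base y = φ.base x) ▸ hx
  exact congrArg Subtype.val (hinj (a₁ := ⟨y, hyU⟩) (a₂ := ⟨x, hx⟩) (Subtype.ext hy))

end IsoOver

theorem exists_lift_of_isIso_morphismRestrict {X Xt : Scheme} (φ : Xt ⟶ X) (U : X.Opens)
    [IsIso (φ ∣_ U)] (hsurj : Function.Surjective φ.base) {x : X} (hxU : x ∈ U)
    (hx : IsClosed ({x} : Set X)) :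
    ∃ x' : Xt, φ.base x' = x ∧ IsClosed ({x'} : Set Xt) ∧
      Function.Bijective (φ.residueFieldMap x').hom := by
  obtain ⟨x', rfl⟩ := hsurj x
  refine ⟨x', rfl, ?_, bijective_residueFieldMap_of_isIso_morphismRestrict φ U hxU⟩
  rw [← preimage_singleton_eq_of_isIso_morphismRestrict φ U hxU]
  exact hx.preimage φ.base.hom.continuous

theorem exists_lift_of_bijective_resMap (k : Type) [Field k] {X Xt : Scheme}
    [X.Over (Spec (CommRingCat.of k))] [Xt.Over (Spec (CommRingCat.of k))]
    (φ : Xt ⟶ X) [QuasiCompact φ]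
    (hφover : φ ≫ (X ↘ Spec (CommRingCat.of k)) = Xt ↘ Spec (CommRingCat.of k))
    (hsurj : Function.Surjective φ.base) {x : X} (hx : IsClosed ({x} : Set X))
    (hresX : Function.Bijective (resMap k X x))
    (hresXt : ∀ x' : Xt, φ.base x' = x → Function.Bijective (resMap k Xt x')) :
    ∃ x' : Xt, φ.base x' = x ∧ IsClosed ({x'} : Set Xt) ∧
      Function.Bijective (φ.residueFieldMap x').hom := by
  obtain ⟨x', rfl, hx'⟩ := (hx.preimage φ.base.hom.continuous).exists_closed_singleton_of_isCompact
    (φ.isCompact_preimage_singleton x) (hsurj x)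
  refine ⟨x', rfl, hx', ?_⟩
  have hcomp := hresXt x' rfl
  rw [← residueFieldMap_comp_resMap k φ hφover x', RingHom.coe_comp] at hcomp
  exact (Function.Bijective.of_comp_iff _ hresX).mp hcomp

theorem ZeroCycle.exists_push_eq_of_forall_lift (k : Type) [Field k] {X Xt : Scheme}
    [X.Over (Spec (CommRingCat.of k))] [Xt.Over (Spec (CommRingCat.of k))]
    (φ : Xt ⟶ X) (hφover : φ ≫ (X ↘ Spec (CommRingCat.of k)) = Xt ↘ Spec (CommRingCat.of k))
    (α : ZeroCycle X)
    (hlift : ∀ x ∈ α.support, ∃ x' : Xt, φ.base x' = x ∧ IsClosed ({x'} : Set Xt) ∧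
      Function.Bijective (φ.residueFieldMap x').hom) :
    ∃ β : ZeroCycle Xt, β.IsOnClosedPoints ∧ β.deg k Xt = α.deg k X ∧ β.push φ = α := by
  classical
  by_cases hα0 : α = 0
  · subst hα0
    exact ⟨0, by simp [ZeroCycle.IsOnClosedPoints], by simp [ZeroCycle.deg],
      by simp [ZeroCycle.push]⟩
  obtain ⟨x₀, hx₀⟩ := Finsupp.support_nonempty_iff.mpr hα0
  have : Nonempty Xt := ⟨(hlift x₀ hx₀).choose⟩
  choose! L hLφ hLclosed hLbij using hlift
  refine ⟨α.mapDomain L, fun y hy => ?_, ?_, ?_⟩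
  · obtain ⟨x, hx, rfl⟩ := Finset.mem_image.mp (Finsupp.mapDomain_support hy)
    exact hLclosed x hx
  · rw [ZeroCycle.deg, ZeroCycle.deg,
      Finsupp.sum_mapDomain_index (fun _ => zero_mul _) (fun _ _ _ => add_mul _ _ _)]
    refine Finsupp.sum_congr fun x hx => ?_
    rw [pointDeg_eq_of_bijective_residueFieldMap k φ hφover _ (hLbij x hx), hLφ x hx]
  · rw [ZeroCycle.push, Finsupp.sum_mapDomain_index (fun _ => by simp)
      (fun _ _ _ => by rw [add_mul, Finsupp.single_add])]
    conv_rhs => rw [← Finsupp.sum_single α]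
    refine Finsupp.sum_congr fun x hx => ?_
    rw [relDeg_eq_one_of_bijective φ _ (hLbij x hx), hLφ x hx, Nat.cast_one, mul_one]

theorem stmt_0_general (k : Type) [Field k] (X Xt : Scheme)
    [X.Over (Spec (CommRingCat.of k))] [Xt.Over (Spec (CommRingCat.of k))]
    (φ : Xt ⟶ X) [IsFinite φ] (hφover : φ ≫ (X ↘ Spec (CommRingCat.of k)) =
      Xt ↘ Spec (CommRingCat.of k))
    (hsurj : Function.Surjective φ.base)
    (U : X.Opens) (hU : (U : Set X) = {x : X | IsRegularPoint X x})
    (hiso : IsIso (φ ∣_ U))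
    (hres : ∀ z : X, ¬ IsRegularPoint X z →
      Function.Bijective (resMap k X z) ∧
      ∀ z' : Xt, φ.base z' = z → Function.Bijective (resMap k Xt z'))
    (α : ZeroCycle X) (hα : α.IsOnClosedPoints) (hdeg : α.deg k X = 0) :
    ∃ β : ZeroCycle Xt, β.IsOnClosedPoints ∧ β.deg k Xt = 0 ∧ β.push φ = α := by
  obtain ⟨β, hβ, hβdeg, hβpush⟩ :=
    ZeroCycle.exists_push_eq_of_forall_lift k φ hφover α fun x hx => by
      by_cases hreg : IsRegularPoint X x
      · have hxU : x ∈ (U : Set X) := hU ▸ hreg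
        exact exists_lift_of_isIso_morphismRestrict φ U hsurj hxU (hα x hx)
      · exact exists_lift_of_bijective_resMap k φ hφover hsurj (hα x hx) (hres x hreg).1
          (hres x hreg).2
  exact ⟨β, hβ, hβdeg.trans hdeg, hβpush⟩

/-- Let `X` be a reduced, connected, `1`-dimensional proper scheme over a
field `k` and let `φ : X̃ → X` be its normalization (a finite surjective morphism from a
normal scheme which is an isomorphism over the regular locus). Let `Z` be the set of
non-regular points of `X` and assume that for all `z ∈ Z` and all `z' ∈ φ⁻¹(z)` one has
`k(z') = k(z) = k`, and that `Z ≠ ∅`. Then every degree-zero zero-cycle on `X` is the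
pushforward under `φ` of a degree-zero zero-cycle on `X̃`. -/
theorem stmt_0 (k : Type) [Field k] (X Xt : Scheme)
    [X.Over (Spec (CommRingCat.of k))] [Xt.Over (Spec (CommRingCat.of k))]
    [IsReduced X] [ConnectedSpace X] (hdim : topologicalKrullDim X = 1)
    [IsProper (X ↘ Spec (CommRingCat.of k))]
    (φ : Xt ⟶ X) [IsFinite φ] (hφover : φ ≫ (X ↘ Spec (CommRingCat.of k)) =
      Xt ↘ Spec (CommRingCat.of k))
    (hsurj : Function.Surjective φ.base)
    (hnormal : ∀ x : Xt, ∃ _ : IsDomain (Xt.presheaf.stalk x),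
      IsIntegrallyClosed (Xt.presheaf.stalk x))
    (U : X.Opens) (hU : (U : Set X) = {x : X | IsRegularPoint X x})
    (hiso : IsIso (φ ∣_ U))
    (hres : ∀ z : X, ¬ IsRegularPoint X z →
      Function.Bijective (resMap k X z) ∧
      ∀ z' : Xt, φ.base z' = z → Function.Bijective (resMap k Xt z'))
    (hZne : ∃ z : X, ¬ IsRegularPoint X z)
    (α : ZeroCycle X) (hα : α.IsOnClosedPoints) (hdeg : α.deg k X = 0) :
    ∃ β : ZeroCycle Xt, β.IsOnClosedPoints ∧ β.deg k Xt = 0 ∧ β.push φ = α :=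
  stmt_0_general k X Xt φ hφover hsurj U hU hiso hres α hα hdeg

end
end

section
/- Let $k$ be a perfect field of characteristic $p > 0$, let $K = k((t))$ with valuation $v$, and let $f \in K^{\times}$, $r \geq 1$. Write $g = u/t^r$ with $u \in k[[t]]^{\times}$, and suppose that both $g \, df/f$ and $g \, dt/t$ extend to regular differentials, i.e. $g \frac{f'}{f} \in k[[t]]$ where $f'$ is the $t$-derivative of $f$. If $f \in k[[t]]^{\times}$ is a unit, then there exist $v \in k[[t]]^{\times}$ and $w \in 1 + t^{r+1} k[[t]]$ such that $f = v^p \cdot w$. -/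
/-!
Multiplying by units does not change divisibility by `X ^ r`, so the hypothesis says that
`X ^ r ∣ f'`. Hence the coefficients `cᵢ` of `f` with `1 ≤ i ≤ r` and `p ∤ i` vanish, i.e. the
truncation of `f` below degree `r + 1` has zero derivative; over a perfect ring of
characteristic `p` it is then a `p`-th power `qᵖ`. The series `q` is a unit because
`q(0)ᵖ = f(0)`, and `w = q⁻ᵖ f ≡ 1` modulo `X ^ (r + 1)`.
-/

open PowerSeries

section

variable {R : Type*} [CommRing R]

theorem PowerSeries.X_pow_dvd_sub_trunc (n : ℕ) (f : PowerSeries R) :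
    (X : PowerSeries R) ^ n ∣ f - trunc n f :=
  ⟨_, sub_eq_of_eq_add (eq_X_pow_mul_shift_add_trunc n f)⟩

theorem PowerSeries.derivative_trunc_eq_zero_of_X_pow_dvd {f : PowerSeries R} {r : ℕ}
    (h : (X : PowerSeries R) ^ r ∣ d⁄dX R f) : Polynomial.derivative (trunc (r + 1) f) = 0 := by
  obtain ⟨g, hg⟩ := h
  rw [← trunc_derivative, hg, trunc_X_pow_self_mul]

theorem PowerSeries.isUnit_of_X_dvd_sub {f g : PowerSeries R} (hf : IsUnit f)
    (h : (X : PowerSeries R) ∣ f - g) : IsUnit g := by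
  rw [X_dvd_iff, map_sub, sub_eq_zero] at h
  rw [isUnit_iff_constantCoeff, ← h]
  exact hf.map constantCoeff

variable [IsDomain R] (p : ℕ) [Fact p.Prime] [CharP R p] [PerfectRing R p]

theorem Polynomial.exists_eq_pow_char_of_derivative_eq_zero {g : Polynomial R}
    (hg : Polynomial.derivative g = 0) : ∃ q : Polynomial R, g = q ^ p :=
  ⟨_, by rw [← polynomial_expand_eq, Polynomial.expand_contract p hg (NeZero.ne p)]⟩

theorem PowerSeries.exists_X_pow_succ_dvd_sub_pow_of_X_pow_dvd_derivative {f : PowerSeries R}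
    {r : ℕ} (h : (X : PowerSeries R) ^ r ∣ d⁄dX R f) :
    ∃ q : PowerSeries R, X ^ (r + 1) ∣ f - q ^ p := by
  obtain ⟨q, hq⟩ := Polynomial.exists_eq_pow_char_of_derivative_eq_zero p
    (derivative_trunc_eq_zero_of_X_pow_dvd h)
  refine ⟨q, ?_⟩
  rw [← Polynomial.coe_pow, ← hq]
  exact X_pow_dvd_sub_trunc (r + 1) f

end

theorem stmt_3_general (k : Type*) [Field k] [PerfectField k] (p : ℕ) [Fact p.Prime] [CharP k p]
    (r : ℕ) (u : (PowerSeries k)ˣ) (f : (PowerSeries k)ˣ)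
    (hreg : (X : PowerSeries k) ^ r ∣
      (u : PowerSeries k) * (f : PowerSeries k).derivativeFun * ((f⁻¹ : (PowerSeries k)ˣ) : PowerSeries k)) :
    ∃ (v : (PowerSeries k)ˣ) (w : PowerSeries k),
      (X : PowerSeries k) ^ (r + 1) ∣ w - 1 ∧
      (f : PowerSeries k) = (v : PowerSeries k) ^ p * w := by
  have hf' : (X : PowerSeries k) ^ r ∣ d⁄dX k f := by
    rwa [Units.dvd_mul_right, Units.dvd_mul_left] at hreg
  obtain ⟨q, hq⟩ := exists_X_pow_succ_dvd_sub_pow_of_X_pow_dvd_derivative p hf'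
  have hqp : IsUnit (q ^ p) :=
    isUnit_of_X_dvd_sub f.isUnit ((dvd_pow_self X (Nat.succ_ne_zero r)).trans hq)
  obtain ⟨v, rfl⟩ := (isUnit_pow_iff (NeZero.ne p)).mp hqp
  refine ⟨v, ((v⁻¹ : (PowerSeries k)ˣ) : PowerSeries k) ^ p * f, ?_, ?_⟩
  · have hw : ((v⁻¹ : (PowerSeries k)ˣ) : PowerSeries k) ^ p * f - 1
        = ((v⁻¹ : (PowerSeries k)ˣ) : PowerSeries k) ^ p * (f - (v : PowerSeries k) ^ p) := by
      rw [mul_sub, ← mul_pow, Units.inv_mul, one_pow]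
    rw [hw]
    exact hq.mul_left _
  · rw [← mul_assoc, ← mul_pow, Units.mul_inv, one_pow, one_mul]

/-- Let `k` be perfect of characteristic `p > 0`, `K = k((t))`, `r ≥ 1` and let
`g = u/tʳ` with `u ∈ k[[t]]ˣ`. If `f ∈ k[[t]]ˣ` is a unit such that `g·f'/f` is a regular
power series (equivalently `tʳ ∣ u · f' · f⁻¹` in `k[[t]]`), then `f = vᵖ · w` for some
`v ∈ k[[t]]ˣ` and `w ∈ 1 + t^{r+1} k[[t]]`. -/
theorem stmt_3 (k : Type*) [Field k] [PerfectField k] (p : ℕ) [Fact p.Prime] [CharP k p]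
    (r : ℕ) (hr : 1 ≤ r) (u : (PowerSeries k)ˣ) (f : (PowerSeries k)ˣ)
    (hreg : (X : PowerSeries k) ^ r ∣
      (u : PowerSeries k) * (f : PowerSeries k).derivativeFun * ((f⁻¹ : (PowerSeries k)ˣ) : PowerSeries k)) :
    ∃ (v : (PowerSeries k)ˣ) (w : PowerSeries k),
      (X : PowerSeries k) ^ (r + 1) ∣ w - 1 ∧
      (f : PowerSeries k) = (v : PowerSeries k) ^ p * w :=
  stmt_3_general k p r u f hreg
end

section
/- Let $k$ be a perfect field of characteristic $p > 0$, $K = k((t))$, and $f, g \in K^{\times}$ with $v(f) = 0$ (i.e. $f \in k[[t]]^{\times}$) and $v(g) = -r < 0$. Assume $g f'/f \in k[[t]]$ (where $f'$ is the formal derivative). Then the image of $f$ in $K^{\times}/((K^{\times})^p \cdot (1 + t^{r+1}k[[t]]))$ is trivial. -/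
/-!
Write `f = F` with `F ∈ k⟦t⟧ˣ`. Since `g` has a pole of order `r` and `g F' / F` is integral,
`F'` vanishes to order `r`, so the coefficient of `tⁿ` in `F` is zero whenever `n ≤ r` and `p ∤ n`.
Taking `p`-th roots of the remaining coefficients gives `G` with `Gᵖ ≡ F mod t^(r+1)`,
and `f = Gᵖ · (F / Gᵖ)`.
-/

open PowerSeries

namespace PowerSeries

theorem map_frobenius_expand {R : Type*} [CommRing R] (p : ℕ) [ExpChar R p] (hp : p ≠ 0)
    (φ : R⟦X⟧) : map (frobenius R p) (expand p hp φ) = φ ^ p := by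
  ext n
  rw [← coeff_coe_trunc_of_lt (Nat.lt_succ_self n) (f := φ ^ p), ← trunc_trunc_pow,
    coeff_coe_trunc_of_lt (Nat.lt_succ_self n), ← Polynomial.coe_pow,
    ← Polynomial.map_frobenius_expand, Polynomial.coeff_coe, Polynomial.coeff_map,
    Polynomial.coeff_expand (Nat.pos_of_ne_zero hp), coeff_map, coeff_expand]
  split_ifs with hdvd
  · rw [coeff_trunc, if_pos]
    exact Nat.lt_succ_of_le (Nat.div_le_self n p)
  · rfl

theorem coeff_eq_zero_of_coeff_derivative_eq_zero {R : Type*} [CommRing R] [NoZeroDivisors R]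
    {p : ℕ} [CharP R p] {F : R⟦X⟧} {r : ℕ} (hF : ∀ i < r, coeff i (d⁄dX R F) = 0)
    {n : ℕ} (hn : n ≤ r) (hpn : ¬ p ∣ n) : coeff n F = 0 := by
  obtain ⟨m, rfl⟩ := Nat.exists_eq_succ_of_ne_zero (n := n) (by rintro rfl; exact hpn (dvd_zero p))
  have hm : coeff (m + 1) F * (m + 1 : ℕ) = 0 := by
    rw [← hF m hn]; exact_mod_cast (coeff_derivative F m).symm
  exact (mul_eq_zero.mp hm).resolve_right ((CharP.cast_eq_zero_iff R p _).not.mpr hpn)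

theorem exists_X_pow_dvd_sub_pow {R : Type*} [CommRing R] (p : ℕ) [ExpChar R p] [PerfectRing R p]
    {F : R⟦X⟧} {r : ℕ} (hF : ∀ n ≤ r, ¬ p ∣ n → coeff n F = 0) :
    ∃ G : R⟦X⟧, X ^ (r + 1) ∣ F - G ^ p := by
  have hp := expChar_ne_zero R p
  let G : R⟦X⟧ := mk fun j => (frobeniusEquiv R p).symm (coeff (p * j) F)
  refine ⟨G, X_pow_dvd_iff.mpr fun n hn => ?_⟩
  rw [← map_frobenius_expand p hp, map_sub, coeff_map, coeff_expand, sub_eq_zero]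
  split_ifs with hdvd
  · rw [coeff_mk, Nat.mul_div_cancel' hdvd]
    exact ((frobeniusEquiv R p).apply_symm_apply _).symm
  · rw [map_zero]; exact hF n (Nat.le_of_lt_succ hn) hdvd

end PowerSeries

theorem exists_eq_mul_dvd_sub_one_of_dvd_sub {R : Type*} [CommRing R] {d a u : R} (hu : IsUnit u)
    (h : d ∣ a - u) : ∃ w, d ∣ w - 1 ∧ a = u * w := by
  obtain ⟨u, rfl⟩ := hu
  refine ⟨↑u⁻¹ * a, ?_, by rw [Units.mul_inv_cancel_left]⟩
  rw [show ↑u⁻¹ * a - 1 = ↑u⁻¹ * (a - u) by rw [mul_sub, Units.inv_mul]]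
  exact h.mul_left _

namespace LaurentSeries

theorem order_ofPowerSeries_nonneg {R : Type*} [Semiring R] (Q : R⟦X⟧) :
    0 ≤ (HahnSeries.ofPowerSeries ℤ R Q).order := by
  by_cases hQ : HahnSeries.ofPowerSeries ℤ R Q = 0
  · rw [hQ, HahnSeries.order_zero]
  by_contra! hneg
  refine (HahnSeries.coeff_order_eq_zero.not.mpr hQ) ?_
  rw [HahnSeries.ofPowerSeries_apply, HahnSeries.embDomain_of_notMem_range]
  rintro ⟨n, hn⟩
  have : (n : ℤ) = (HahnSeries.ofPowerSeries ℤ R Q).order := hn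
  omega

theorem coeff_eq_zero_of_mul_mem_range {K : Type*} [Field K] {x y : K⸨X⸩} (hx : x ≠ 0)
    (hxy : x * y ∈ Set.range (HahnSeries.ofPowerSeries ℤ K)) {i : ℤ} (hi : i < -x.order) :
    y.coeff i = 0 := by
  by_cases hy : y = 0
  · rw [hy, HahnSeries.coeff_zero]
  obtain ⟨Q, hQ⟩ := hxy
  have := order_ofPowerSeries_nonneg Q
  rw [hQ, HahnSeries.order_mul hx hy] at this
  exact HahnSeries.coeff_eq_zero_of_lt_order (by omega)

end LaurentSeries

theorem stmt_12_general (k : Type*) [Field k] [PerfectField k] (p : ℕ) [Fact p.Prime] [CharP k p]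
    (r : ℕ) (f g : LaurentSeries k) (hf : f ≠ 0) (hg : g ≠ 0)
    (hvf : f.order = 0) (hvg : g.order = -(r : ℤ))
    (hreg : g * (HahnSeries.ofPowerSeries ℤ k f.powerSeriesPart.derivativeFun) * f⁻¹ ∈
      Set.range (HahnSeries.ofPowerSeries ℤ k)) :
    ∃ (h : LaurentSeries k) (w : PowerSeries k), h ≠ 0 ∧
      (X : PowerSeries k) ^ (r + 1) ∣ w - 1 ∧
      f = h ^ p * (HahnSeries.ofPowerSeries ℤ k w) := by
  set F := f.powerSeriesPart
  have hF : HahnSeries.ofPowerSeries ℤ k F = f := by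
    simp [F, LaurentSeries.ofPowerSeries_powerSeriesPart, hvf]
  have hgF' : g * HahnSeries.ofPowerSeries ℤ k (d⁄dX k F) ∈
      Set.range (HahnSeries.ofPowerSeries ℤ k) := by
    obtain ⟨Q, hQ⟩ := hreg
    exact ⟨Q * F, by rw [map_mul, hQ, hF, inv_mul_cancel_right₀ hf]; rfl⟩
  have hF' : ∀ i < r, coeff i (d⁄dX k F) = 0 := fun i hi => by
    rw [← HahnSeries.ofPowerSeries_apply_coeff (Γ := ℤ)]
    exact LaurentSeries.coeff_eq_zero_of_mul_mem_range hg hgF' (by omega)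
  obtain ⟨G, hG⟩ := exists_X_pow_dvd_sub_pow p fun n hn hpn =>
    coeff_eq_zero_of_coeff_derivative_eq_zero hF' hn hpn
  have hF0 : constantCoeff F ≠ 0 := by
    rw [← coeff_zero_eq_constantCoeff_apply, LaurentSeries.powerSeriesPart_coeff]
    simpa [hvf] using HahnSeries.coeff_order_eq_zero.not.mpr hf
  have hGp : IsUnit (G ^ p) := by
    have hG0 := X_dvd_iff.mp ((dvd_pow_self X r.succ_ne_zero).trans hG)
    rw [map_sub, sub_eq_zero] at hG0
    rw [isUnit_iff_constantCoeff, isUnit_iff_ne_zero, ← hG0]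
    exact hF0
  obtain ⟨w, hw, hFw⟩ := exists_eq_mul_dvd_sub_one_of_dvd_sub hGp hG
  refine ⟨HahnSeries.ofPowerSeries ℤ k G, w, fun hG0 => hf ?_, hw, ?_⟩
  · rw [← hF, hFw, map_mul, map_pow, hG0, zero_pow (Fact.out : p.Prime).ne_zero, zero_mul]
  · rw [← hF, hFw, map_mul, map_pow]

/-- Let `k` be perfect of characteristic `p > 0` and `K = k((t))`. Let `f, g ∈ K^×` with
`v(f) = 0` and `v(g) = -r < 0`, and assume `g·f'/f ∈ k[[t]]`. Then the class of `f` in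
`K^×/((K^×)ᵖ · (1 + t^{r+1} k[[t]]))` is trivial, i.e. `f = hᵖ · w` with `h ∈ K^×` and
`w ∈ 1 + t^{r+1} k[[t]]`. -/
theorem stmt_12 (k : Type*) [Field k] [PerfectField k] (p : ℕ) [Fact p.Prime] [CharP k p]
    (r : ℕ) (hr : 1 ≤ r) (f g : LaurentSeries k) (hf : f ≠ 0) (hg : g ≠ 0)
    (hvf : f.order = 0) (hvg : g.order = -(r : ℤ))
    (hreg : g * (HahnSeries.ofPowerSeries ℤ k f.powerSeriesPart.derivativeFun) * f⁻¹ ∈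
      Set.range (HahnSeries.ofPowerSeries ℤ k)) :
    ∃ (h : LaurentSeries k) (w : PowerSeries k), h ≠ 0 ∧
      (X : PowerSeries k) ^ (r + 1) ∣ w - 1 ∧
      f = h ^ p * (HahnSeries.ofPowerSeries ℤ k w) :=
  stmt_12_general k p r f g hf hg hvf hvg hreg
end

section
/- Let $k$ be a perfect field of characteristic $p > 0$ and $r \geq 1$. Suppose $a_{i_0}, a_{i_0+1}, \dots, a_r \in k$, $u \in k[[t]]^{\times}$, and $p \nmid i_0$ with $1 \leq i_0 \leq r$, and assume $\sum_{i=i_0}^{r} \frac{i\, a_i\, u}{1 + a_i t^i} \cdot \frac{t^{i-1}}{t^{r}} \in k[[t]]$. Then $a_{i_0} = 0$. -/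
open PowerSeries

/-- Key step in the 4th case of the local symbol computation: if
`∑_{i=i₀, p ∤ i}^{r} (i aᵢ u)/(1 + aᵢ tⁱ) · t^{i-1}/t^r` is a regular power series
(i.e. `t^r` divides the sum of the numerators), `u` is a unit, `1 ≤ i₀ ≤ r` and `p ∤ i₀`,
then `a_{i₀} = 0`. -/
theorem stmt_18 (k : Type*) [Field k] [PerfectField k] (p : ℕ) [Fact p.Prime] [CharP k p]
    (r i₀ : ℕ) (hr : 1 ≤ r) (hi₀ : 1 ≤ i₀) (hi₀r : i₀ ≤ r) (hpi₀ : ¬ p ∣ i₀)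
    (a : ℕ → k) (u : (PowerSeries k)ˣ)
    (hreg : (X : PowerSeries k) ^ r ∣
      ∑ i ∈ (Finset.Icc i₀ r).filter (fun i => ¬ p ∣ i),
        C ((i : k) * a i) * (u : PowerSeries k) * (1 + C (a i) * X ^ i)⁻¹ * X ^ (i - 1)) :
    a i₀ = 0 := by
  rw [X_pow_dvd_iff] at hreg
  have h := hreg (i₀ - 1) (lt_of_lt_of_le (Nat.sub_lt hi₀ one_pos) hi₀r)
  rw [map_sum] at h
  rw [Finset.sum_eq_single_of_mem i₀ (by
      simp only [Finset.mem_filter, Finset.mem_Icc]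
      exact ⟨⟨le_refl _, hi₀r⟩, hpi₀⟩)] at h
  · -- coeff (i₀-1) of (C(i₀ a) * u * inv * X^(i₀-1)) = i₀ a * u₀ * inv₀
    rw [PowerSeries.coeff_mul_X_pow', if_pos le_rfl, Nat.sub_self,
      coeff_zero_eq_constantCoeff] at h
    simp only [map_mul, constantCoeff_C, PowerSeries.constantCoeff_inv, map_add, map_one,
      map_pow, constantCoeff_X, zero_pow (Nat.one_le_iff_ne_zero.mp hi₀), mul_zero, add_zero,
      inv_one, mul_one] at h
    have hu : constantCoeff (u : PowerSeries k) ≠ 0 :=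
      ((PowerSeries.isUnit_iff_constantCoeff).mp u.isUnit).ne_zero
    have hi : (i₀ : k) ≠ 0 := by rwa [Ne, CharP.cast_eq_zero_iff k p i₀]
    rcases mul_eq_zero.mp h with h' | h'
    · rcases mul_eq_zero.mp h' with h'' | h''
      · exact absurd h'' hi
      · exact h''
    · exact absurd h' hu
  · intro i hi hne
    simp only [Finset.mem_filter, Finset.mem_Icc] at hi
    have hgt : i₀ - 1 < i - 1 := by
      have : i₀ < i := lt_of_le_of_ne hi.1.1 (Ne.symm hne)
      omega
    rw [PowerSeries.coeff_mul_X_pow', if_neg (not_le.mpr hgt)]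
end
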